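/- arXiv:2407.14870 — 2 statements merged into one kernel-verified Lean document; each statement's English description precedes it below -/
import Mathlib

section
/- Let ψ be an Orlicz function and φ an Orlicz function with φ ∈ C⁰_{ψ,1} (the closed convex hull in C[0,1] of the functions t ↦ ψ(st)/ψ(s), 0 < s < 1). Then the Matuszewska–Orlicz indices at zero satisfy α⁰_ψ ≤ α⁰_φ ≤ β⁰_φ ≤ β⁰_ψ. -/
/-!
For fixed `s, t ∈ (0,1]` and constants `C, p`, the condition `g(st) ≤ C sᵖ g(t)` on
`g ∈ C[0,1]` is a closed half-space. It is invariant under the dilations `ψ ↦ ψ(s₀ ·)/ψ(s₀)`: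
if `ψ` satisfies it for all `s, t`, so does every element of `E⁰_{ψ,1}`, hence every element
of `C⁰_{ψ,1}`, in particular `φ`. The same holds for the reversed inequality, so the exponent
sets defining `α⁰` and `β⁰` only grow from `ψ` to `φ`. Taking `t = 1` and `s → 0` shows every
α-exponent lies below every β-exponent, and `Δ₂` makes the β-set of `ψ` (hence of `φ`) nonempty,
which provides the boundedness needed to compare the suprema and infima.
-/

open Set

/-- An Orlicz function: increasing, convex, continuous on `[0,∞)`, vanishing at `0`. -/
def IsOrlicz (M : ℝ → ℝ) : Prop :=
  StrictMonoOn M (Ici (0:ℝ)) ∧ ConvexOn ℝ (Ici (0:ℝ)) M ∧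
    ContinuousOn M (Ici (0:ℝ)) ∧ M 0 = 0

/-- The Matuszewska–Orlicz index `α⁰_ψ` at zero. -/
noncomputable def alphaZero (ψ : ℝ → ℝ) : ℝ :=
  sSup {p : ℝ | ∃ C : ℝ, 0 < C ∧
    ∀ s ∈ Ioc (0:ℝ) 1, ∀ t ∈ Ioc (0:ℝ) 1, ψ (s * t) ≤ C * s ^ p * ψ t}

/-- The Matuszewska–Orlicz index `β⁰_ψ` at zero. -/
noncomputable def betaZero (ψ : ℝ → ℝ) : ℝ :=
  sInf {p : ℝ | ∃ c : ℝ, 0 < c ∧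
    ∀ s ∈ Ioc (0:ℝ) 1, ∀ t ∈ Ioc (0:ℝ) 1, c * s ^ p * ψ t ≤ ψ (s * t)}

/-- The set `E⁰_{ψ,1}` of normalized dilations `t ↦ ψ(st)/ψ(s)`, `0 < s < 1`,
viewed inside `C[0,1]`. -/
def EZero (ψ : ℝ → ℝ) : Set C(Icc (0:ℝ) 1, ℝ) :=
  {g | ∃ s : ℝ, 0 < s ∧ s < 1 ∧ ∀ t : Icc (0:ℝ) 1, g t = ψ (s * t) / ψ s}

open Filter Topology

lemma ContinuousLinearMap.le_of_mem_closedConvexHull {E : Type*} [AddCommGroup E] [Module ℝ E]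
    [TopologicalSpace E] {s : Set E} {x : E} (hx : x ∈ closedConvexHull ℝ s)
    (ℓ ℓ' : E →L[ℝ] ℝ) (h : ∀ y ∈ s, ℓ y ≤ ℓ' y) : ℓ x ≤ ℓ' x := by
  have hconv : Convex ℝ {y | ℓ y ≤ ℓ' y} := by
    convert (convex_Ici (0 : ℝ)).linear_preimage (ℓ' - ℓ).toLinearMap using 1
    ext y
    simp [sub_nonneg]
  exact closedConvexHull_min h hconv (isClosed_le ℓ.continuous ℓ'.continuous) hx

lemma StrictMonoOn.pos_of_map_zero {M : ℝ → ℝ} (hM : StrictMonoOn M (Ici 0)) (hM0 : M 0 = 0)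
    {u : ℝ} (hu : 0 < u) : 0 < M u :=
  hM0 ▸ hM self_mem_Ici hu.le hu

lemma mul_mem_Ioc_zero_one {s t : ℝ} (hs : s ∈ Ioc (0:ℝ) 1) (ht : t ∈ Ioc (0:ℝ) 1) :
    s * t ∈ Ioc (0:ℝ) 1 :=
  ⟨mul_pos hs.1 ht.1, mul_le_one₀ hs.2 ht.1.le ht.2⟩

def alphaSet (ψ : ℝ → ℝ) : Set ℝ :=
  {p | ∃ C : ℝ, 0 < C ∧ ∀ s ∈ Ioc (0:ℝ) 1, ∀ t ∈ Ioc (0:ℝ) 1, ψ (s * t) ≤ C * s ^ p * ψ t}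

def betaSet (ψ : ℝ → ℝ) : Set ℝ :=
  {p | ∃ c : ℝ, 0 < c ∧ ∀ s ∈ Ioc (0:ℝ) 1, ∀ t ∈ Ioc (0:ℝ) 1, c * s ^ p * ψ t ≤ ψ (s * t)}

lemma alphaZero_eq_sSup (ψ : ℝ → ℝ) : alphaZero ψ = sSup (alphaSet ψ) := rfl

lemma betaZero_eq_sInf (ψ : ℝ → ℝ) : betaZero ψ = sInf (betaSet ψ) := rfl

lemma zero_mem_alphaSet {ψ : ℝ → ℝ} (hψ : MonotoneOn ψ (Ici 0)) : (0:ℝ) ∈ alphaSet ψ := by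
  refine ⟨1, one_pos, fun s hs t ht => ?_⟩
  rw [Real.rpow_zero, mul_one, one_mul]
  exact hψ (mul_nonneg hs.1.le ht.1.le) ht.1.le (mul_le_of_le_one_left ht.1.le hs.2)

lemma le_of_mem_alphaSet_of_mem_betaSet {ψ : ℝ → ℝ} (hψ1 : 0 < ψ 1) {p q : ℝ}
    (hp : p ∈ alphaSet ψ) (hq : q ∈ betaSet ψ) : p ≤ q := by
  obtain ⟨C, hC, hpC⟩ := hp
  obtain ⟨c, hc, hqc⟩ := hq
  by_contra! hqp
  have hbound : ∀ s ∈ Ioc (0:ℝ) 1, c / C ≤ s ^ (p - q) := fun s hs => by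
    have h := (hqc s hs 1 (right_mem_Ioc.2 one_pos)).trans (hpC s hs 1 (right_mem_Ioc.2 one_pos))
    rw [Real.rpow_sub hs.1, div_le_div_iff₀ hC (Real.rpow_pos_of_pos hs.1 q)]
    nlinarith
  have hlim : Tendsto (fun s : ℝ => s ^ (p - q)) (𝓝[>] 0) (𝓝 0) := by
    have h := (Real.continuousAt_rpow_const 0 (p - q) (Or.inr (sub_pos.2 hqp).le)).tendsto
    rw [Real.zero_rpow (sub_pos.2 hqp).ne'] at h
    exact h.mono_left nhdsWithin_le_nhds
  obtain ⟨s, hsmall, hs⟩ :=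
    ((hlim.eventually (gt_mem_nhds (div_pos hc hC))).and (Ioc_mem_nhdsGT one_pos)).exists
  exact (hbound s hs).not_gt hsmall

lemma le_pow_mul_of_delta2 {ψ : ℝ → ℝ} {K : ℝ} (hK0 : 0 ≤ K)
    (hK : ∀ u : ℝ, 0 < u → u ≤ 1 → ψ (2 * u) ≤ K * ψ u) (n : ℕ) {u : ℝ} (hu : 0 < u)
    (hn : 2 ^ n * u ≤ 1) : ψ (2 ^ n * u) ≤ K ^ n * ψ u := by
  induction n with
  | zero => simp
  | succ n ih =>
    have hn' : 2 ^ n * u ≤ 1 := le_trans (by gcongr <;> norm_num) hn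
    calc ψ (2 ^ (n + 1) * u) = ψ (2 * (2 ^ n * u)) := by ring_nf
      _ ≤ K * ψ (2 ^ n * u) := hK _ (by positivity) hn'
      _ ≤ K * (K ^ n * ψ u) := mul_le_mul_of_nonneg_left (ih hn') hK0
      _ = K ^ (n + 1) * ψ u := by ring

lemma rpow_logb_mul_pow_le_one {s K : ℝ} (hs : 0 ≤ s) (hK : 1 ≤ K) {n : ℕ}
    (hsn : s * 2 ^ n ≤ 1) : s ^ Real.logb 2 K * K ^ n ≤ 1 := by
  have hKn : K ^ n = ((2:ℝ) ^ n) ^ Real.logb 2 K := by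
    rw [← Real.rpow_pow_comm zero_le_two, Real.rpow_logb two_pos (by norm_num) (by positivity)]
  rw [hKn, ← Real.mul_rpow hs (by positivity)]
  exact Real.rpow_le_one (by positivity) hsn (Real.logb_nonneg one_lt_two hK)

lemma betaSet_nonempty_of_delta2 {ψ : ℝ → ℝ} (hψ : StrictMonoOn ψ (Ici 0)) (hψ0 : ψ 0 = 0)
    (hΔ2 : ∃ K : ℝ, ∀ u : ℝ, 0 < u → u ≤ 1 → ψ (2 * u) ≤ K * ψ u) :
    (betaSet ψ).Nonempty := by
  obtain ⟨K, hK⟩ := hΔ2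
  have hK1 : 1 < K := by
    have h12 := hψ (by norm_num : (1:ℝ) ∈ Ici 0) (by norm_num : (2:ℝ) ∈ Ici 0) one_lt_two
    have h21 := hK 1 one_pos le_rfl
    rw [mul_one] at h21
    nlinarith [hψ.pos_of_map_zero hψ0 one_pos]
  refine ⟨Real.logb 2 K, K⁻¹, by positivity, fun s hs t ht => ?_⟩
  obtain ⟨hs0, hs1⟩ := hs
  obtain ⟨ht0, ht1⟩ := ht
  -- `2ⁿ ≤ 1/s < 2ⁿ⁺¹`: then `t/2ⁿ⁺¹ ≤ st`, and `Kⁿ ≤ s^(-log₂ K)`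
  obtain ⟨n, hn, hn'⟩ := exists_nat_pow_near (one_le_one_div hs0 hs1) one_lt_two
  rw [le_div_iff₀ hs0, mul_comm] at hn
  rw [div_lt_iff₀ hs0] at hn'
  have hu : 0 < t / 2 ^ (n + 1) := by positivity
  have hu_le : t / 2 ^ (n + 1) ≤ s * t := by
    rw [div_le_iff₀ (by positivity)]
    nlinarith [ht0]
  have hψt : ψ t ≤ K ^ (n + 1) * ψ (s * t) :=
    calc ψ t = ψ (2 ^ (n + 1) * (t / 2 ^ (n + 1))) := by field_simp
      _ ≤ K ^ (n + 1) * ψ (t / 2 ^ (n + 1)) :=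
        le_pow_mul_of_delta2 (by linarith) hK _ hu (by field_simp; exact ht1)
      _ ≤ K ^ (n + 1) * ψ (s * t) := by
        gcongr
        exact hψ.monotoneOn hu.le (mul_nonneg hs0.le ht0.le) hu_le
  calc K⁻¹ * s ^ Real.logb 2 K * ψ t
      ≤ K⁻¹ * s ^ Real.logb 2 K * (K ^ (n + 1) * ψ (s * t)) := by gcongr
    _ = (s ^ Real.logb 2 K * K ^ n) * ψ (s * t) := by field_simp; ring
    _ ≤ ψ (s * t) := by
      have := (hψ.pos_of_map_zero hψ0 (mul_pos hs0 ht0)).le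
      nlinarith [rpow_logb_mul_pow_le_one hs0.le hK1.le hn]

lemma mul_apply_le_mul_apply_of_mem_closure_convexHull {ψ : ℝ → ℝ}
    (hψ : ∀ s ∈ Ioo (0:ℝ) 1, 0 ≤ ψ s) {g : C(Icc (0:ℝ) 1, ℝ)}
    (hg : g ∈ closure (convexHull ℝ (closure (EZero ψ)))) {a b : Icc (0:ℝ) 1} {r₁ r₂ : ℝ}
    (h : ∀ s ∈ Ioo (0:ℝ) 1, r₁ * ψ (s * a) ≤ r₂ * ψ (s * b)) :
    r₁ * g a ≤ r₂ * g b := by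
  rw [← closedConvexHull_eq_closure_convexHull, closedConvexHull_closure_eq_closedConvexHull] at hg
  refine (r₁ • ContinuousMap.evalCLM ℝ a).le_of_mem_closedConvexHull hg
    (r₂ • ContinuousMap.evalCLM ℝ b) ?_
  rintro f ⟨s, hs0, hs1, hf⟩
  simp only [smul_apply, ContinuousMap.evalCLM_apply, hf, smul_eq_mul, ← mul_div_assoc]
  exact div_le_div_of_nonneg_right (h s ⟨hs0, hs1⟩) (hψ s ⟨hs0, hs1⟩)

lemma alphaSet_subset_of_mem_closure_convexHull {ψ φ : ℝ → ℝ}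
    (hψ : ∀ s ∈ Ioo (0:ℝ) 1, 0 ≤ ψ s) {hφc : Continuous fun t : Icc (0:ℝ) 1 => φ t}
    (hmem : (⟨fun t : Icc (0:ℝ) 1 => φ t, hφc⟩ : C(Icc (0:ℝ) 1, ℝ)) ∈
      closure (convexHull ℝ (closure (EZero ψ)))) :
    alphaSet ψ ⊆ alphaSet φ := by
  rintro p ⟨C, hC, hp⟩
  refine ⟨C, hC, fun s hs t ht => ?_⟩
  have h := mul_apply_le_mul_apply_of_mem_closure_convexHull hψ hmem
    (a := ⟨s * t, Ioc_subset_Icc_self (mul_mem_Ioc_zero_one hs ht)⟩)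
    (b := ⟨t, Ioc_subset_Icc_self ht⟩) (r₁ := 1) (r₂ := C * s ^ p) fun u hu => by
      rw [one_mul, mul_left_comm]
      exact hp s hs (u * t) (mul_mem_Ioc_zero_one (Ioo_subset_Ioc_self hu) ht)
  simpa using h

lemma betaSet_subset_of_mem_closure_convexHull {ψ φ : ℝ → ℝ}
    (hψ : ∀ s ∈ Ioo (0:ℝ) 1, 0 ≤ ψ s) {hφc : Continuous fun t : Icc (0:ℝ) 1 => φ t}
    (hmem : (⟨fun t : Icc (0:ℝ) 1 => φ t, hφc⟩ : C(Icc (0:ℝ) 1, ℝ)) ∈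
      closure (convexHull ℝ (closure (EZero ψ)))) :
    betaSet ψ ⊆ betaSet φ := by
  rintro q ⟨c, hc, hq⟩
  refine ⟨c, hc, fun s hs t ht => ?_⟩
  have h := mul_apply_le_mul_apply_of_mem_closure_convexHull hψ hmem
    (a := ⟨t, Ioc_subset_Icc_self ht⟩)
    (b := ⟨s * t, Ioc_subset_Icc_self (mul_mem_Ioc_zero_one hs ht)⟩)
    (r₁ := c * s ^ q) (r₂ := 1) fun u hu => by
      rw [one_mul, mul_left_comm u]
      exact hq s hs (u * t) (mul_mem_Ioc_zero_one (Ioo_subset_Ioc_self hu) ht)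
  simpa using h

lemma alphaZero_le_betaZero {ψ : ℝ → ℝ} (hψ : MonotoneOn ψ (Ici 0)) (hψ1 : 0 < ψ 1)
    (hβ : (betaSet ψ).Nonempty) : alphaZero ψ ≤ betaZero ψ := by
  rw [alphaZero_eq_sSup, betaZero_eq_sInf]
  exact csSup_le ⟨0, zero_mem_alphaSet hψ⟩ fun _ hp =>
    le_csInf hβ fun _ hq => le_of_mem_alphaSet_of_mem_betaSet hψ1 hp hq

theorem stmt9_general (ψ φ : ℝ → ℝ)
    (hψ : IsOrlicz ψ) (hφ : IsOrlicz φ)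
    (hψΔ2 : ∃ K : ℝ, ∀ u : ℝ, 0 < u → u ≤ 1 → ψ (2 * u) ≤ K * ψ u)
    (hφc : Continuous fun t : Icc (0:ℝ) 1 => φ t)
    (hmem : (⟨fun t : Icc (0:ℝ) 1 => φ t, hφc⟩ : C(Icc (0:ℝ) 1, ℝ)) ∈
      closure (convexHull ℝ (closure (EZero ψ)))) :
    alphaZero ψ ≤ alphaZero φ ∧ alphaZero φ ≤ betaZero φ ∧ betaZero φ ≤ betaZero ψ := by
  have hψ_nonneg : ∀ s ∈ Ioo (0:ℝ) 1, 0 ≤ ψ s := fun s hs =>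
    (hψ.1.pos_of_map_zero hψ.2.2.2 hs.1).le
  have hα := alphaSet_subset_of_mem_closure_convexHull hψ_nonneg hmem
  have hβ := betaSet_subset_of_mem_closure_convexHull hψ_nonneg hmem
  obtain ⟨q, hq⟩ := betaSet_nonempty_of_delta2 hψ.1 hψ.2.2.2 hψΔ2
  have hφ1 : 0 < φ 1 := hφ.1.pos_of_map_zero hφ.2.2.2 one_pos
  have h0 : (0:ℝ) ∈ alphaSet φ := zero_mem_alphaSet hφ.1.monotoneOn
  refine ⟨?_, alphaZero_le_betaZero hφ.1.monotoneOn hφ1 ⟨q, hβ hq⟩, ?_⟩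
  · rw [alphaZero_eq_sSup, alphaZero_eq_sSup]
    exact csSup_le_csSup ⟨q, fun p hp => le_of_mem_alphaSet_of_mem_betaSet hφ1 hp (hβ hq)⟩
      ⟨0, zero_mem_alphaSet hψ.1.monotoneOn⟩ hα
  · rw [betaZero_eq_sInf, betaZero_eq_sInf]
    exact csInf_le_csInf ⟨0, fun p hp => le_of_mem_alphaSet_of_mem_betaSet hφ1 h0 hp⟩ ⟨q, hq⟩ hβ

/-- If `ψ`, `φ` are Orlicz functions and `φ ∈ C⁰_{ψ,1}` (the closed convex hull in
`C[0,1]` of the normalized dilations of `ψ`), then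
`α⁰_ψ ≤ α⁰_φ ≤ β⁰_φ ≤ β⁰_ψ`. -/
theorem stmt9 (ψ φ : ℝ → ℝ)
    (hψ : IsOrlicz ψ) (hφ : IsOrlicz φ) (hψ1 : ψ 1 = 1) (hφ1 : φ 1 = 1)
    (hψΔ2 : ∃ K : ℝ, ∀ u : ℝ, 0 < u → u ≤ 1 → ψ (2 * u) ≤ K * ψ u)
    (hφc : Continuous fun t : Icc (0:ℝ) 1 => φ t)
    (hmem : (⟨fun t : Icc (0:ℝ) 1 => φ t, hφc⟩ : C(Icc (0:ℝ) 1, ℝ)) ∈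
      closure (convexHull ℝ (closure (EZero ψ)))) :
    alphaZero ψ ≤ alphaZero φ ∧ alphaZero φ ≤ betaZero φ ∧ betaZero φ ≤ betaZero ψ :=
  stmt9_general ψ φ hψ hφ hψΔ2 hφc hmem
end

section
/- Let 1 < p < 2, f(t) = t^{−1/p} ln^{−3/(2p)}(e/t) for 0 < t ≤ 1. Then: (1/t)∫₀ᵗ f(s)^p ds ≍ 1/(t ln^{1/2}(e/t)) for 0 < t ≤ 1; (1/t)∫₀ᵗ f(s) ds ≍ 1/(t^{1/p} ln^{3/(2p)}(e/t)) for 0 < t ≤ 1; and (1/t)∫ₜ¹ f(s)² ds ≍ 1/(t^{2/p} ln^{3/p}(e/t)) for 0 < t ≤ 1/2, with equivalence constants depending only on p. -/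
/-!
Write `ℓ(s) = log (e / s)`, which is `≥ 1` and decreasing on `(0, 1]`; all three averages are
integrals of `s ^ (-a) * ℓ(s) ^ (-b)`. For `a = 1` the integrand is the derivative of
`ℓ ^ (1 - b) / (b - 1)`, so the first average is computed exactly. For `a < 1` the mass of
`∫₀ᵗ` sits near `t`: monotonicity of `ℓ` gives the upper bound `t ^ (1 - a) ℓ(t) ^ (-b) / (1 - a)`,
and `ℓ ≤ 2 ℓ(t)` on `(t/2, t]` the matching lower bound. For `a > 1` the mass of `∫ₜ¹` also sits
near `t`: the lower bound comes from `(t, 2t]`; for the upper bound split at `√t`, where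
`ℓ(√t) ≥ ℓ(t) / 2`, and bound the tail over `(√t, 1]` by `t ^ ((1 - a) / 2)`, which is
`O(t ^ (1 - a) ℓ(t) ^ (-b))` because `t ^ δ ℓ(t) ^ b` is bounded on `(0, 1]` for `δ > 0`.
-/

open MeasureTheory Set Real Filter Topology

/-- `F ≍ G` on `S`. Asking it for every large `C` lets finitely many such estimates share one
constant. -/
def IsComparableOn (F G : ℝ → ℝ) (S : Set ℝ) : Prop :=
  ∀ᶠ C in atTop, ∀ t ∈ S, C⁻¹ * G t ≤ F t ∧ F t ≤ C * G t

lemma IsComparableOn.of_bounds {F G : ℝ → ℝ} {S : Set ℝ} {c C₀ : ℝ} (hc : 0 < c)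
    (hG : ∀ t ∈ S, 0 ≤ G t) (h : ∀ t ∈ S, c * G t ≤ F t ∧ F t ≤ C₀ * G t) :
    IsComparableOn F G S := by
  filter_upwards [eventually_ge_atTop c⁻¹, eventually_ge_atTop C₀] with C hCc hC₀ t ht
  have hC : C⁻¹ ≤ c := inv_le_of_inv_le₀ hc hCc
  exact ⟨(mul_le_mul_of_nonneg_right hC (hG t ht)).trans (h t ht).1,
    (h t ht).2.trans (mul_le_mul_of_nonneg_right hC₀ (hG t ht))⟩

lemma mul_sub_le_setIntegral_of_Ioc_subset {f : ℝ → ℝ} {I : Set ℝ} {u v m : ℝ} (huv : u ≤ v)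
    (hI : MeasurableSet I) (hsub : Ioc u v ⊆ I) (hf : IntegrableOn f I)
    (hf₀ : ∀ x ∈ I, 0 ≤ f x) (hm : ∀ x ∈ Ioc u v, m ≤ f x) :
    m * (v - u) ≤ ∫ x in I, f x := by
  calc m * (v - u) = m * volume.real (Ioc u v) := by rw [Real.volume_real_Ioc_of_le huv]
    _ ≤ ∫ x in Ioc u v, f x :=
        setIntegral_ge_of_const_le_real measurableSet_Ioc measure_Ioc_lt_top.ne hm
          (hf.mono_set hsub)
    _ ≤ ∫ x in I, f x :=
        setIntegral_mono_set hf (ae_restrict_of_forall_mem hI hf₀) hsub.eventuallyLE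

section PowerIntegrals

variable {a t u v : ℝ}

lemma integrableOn_Ioc_zero_rpow_neg (ha : a < 1) :
    IntegrableOn (fun s : ℝ => s ^ (-a)) (Ioc 0 t) :=
  (intervalIntegral.intervalIntegrable_rpow' (by linarith)).1

lemma integrableOn_Ioc_rpow (hu : 0 < u) (huv : u ≤ v) :
    IntegrableOn (fun s : ℝ => s ^ a) (Ioc u v) :=
  (intervalIntegral.intervalIntegrable_rpow
    (Or.inr fun h => hu.not_ge (by rw [uIcc_of_le huv] at h; exact h.1))).1

lemma setIntegral_Ioc_zero_rpow_neg (ha : a < 1) (ht : 0 ≤ t) :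
    ∫ s in Ioc 0 t, s ^ (-a) = t ^ (1 - a) / (1 - a) := by
  rw [← intervalIntegral.integral_of_le ht, integral_rpow (Or.inl (by linarith)),
    zero_rpow (by linarith), sub_zero, neg_add_eq_sub]

lemma setIntegral_Ioc_rpow_neg_le (ha : 1 < a) (hu : 0 < u) (huv : u ≤ v) :
    ∫ s in Ioc u v, s ^ (-a) ≤ u ^ (1 - a) / (a - 1) := by
  have h0 : (0 : ℝ) ∉ uIcc u v := fun h => hu.not_ge (by rw [uIcc_of_le huv] at h; exact h.1)
  rw [← intervalIntegral.integral_of_le huv, integral_rpow (Or.inr ⟨by linarith, h0⟩),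
    neg_add_eq_sub, ← neg_div_neg_eq, neg_sub, neg_sub]
  gcongr
  linarith [rpow_nonneg (hu.trans_le huv).le (1 - a)]

end PowerIntegrals

section LogExpOneDiv

variable {a b s t : ℝ}

lemma log_exp_one_div (hs : 0 < s) : log (exp 1 / s) = 1 - log s := by
  rw [log_div (exp_ne_zero 1) hs.ne', log_exp]

lemma one_le_log_exp_one_div (hs : 0 < s) (hs1 : s ≤ 1) : 1 ≤ log (exp 1 / s) := by
  rw [log_exp_one_div hs]
  linarith [log_nonpos hs.le hs1]

lemma log_exp_one_div_le_of_le (hs : 0 < s) (hst : s ≤ t) :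
    log (exp 1 / t) ≤ log (exp 1 / s) := by
  rw [log_exp_one_div hs, log_exp_one_div (hs.trans_le hst)]
  linarith [log_le_log hs hst]

lemma log_exp_one_div_half_le (ht : 0 < t) (ht1 : t ≤ 1) :
    log (exp 1 / (t / 2)) ≤ 2 * log (exp 1 / t) := by
  rw [log_exp_one_div (by positivity), log_exp_one_div ht, log_div ht.ne' two_ne_zero]
  linarith [log_two_lt_d9, log_nonpos ht.le ht1]

lemma log_exp_one_div_le_two_mul_sqrt (ht : 0 < t) :
    log (exp 1 / t) ≤ 2 * log (exp 1 / t ^ (1 / 2 : ℝ)) := by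
  rw [log_exp_one_div ht, log_exp_one_div (rpow_pos_of_pos ht _), log_rpow ht]
  linarith

lemma log_exp_one_div_rpow_neg_le_one (hb : 0 ≤ b) (hs : 0 < s) (hs1 : s ≤ 1) :
    log (exp 1 / s) ^ (-b) ≤ 1 :=
  rpow_le_one_of_one_le_of_nonpos (one_le_log_exp_one_div hs hs1) (neg_nonpos.2 hb)

lemma log_exp_one_div_rpow_neg_le_of_le (hb : 0 ≤ b) (hs : 0 < s) (hst : s ≤ t) (ht1 : t ≤ 1) :
    log (exp 1 / s) ^ (-b) ≤ log (exp 1 / t) ^ (-b) :=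
  rpow_le_rpow_of_nonpos (one_pos.trans_le (one_le_log_exp_one_div (hs.trans_le hst) ht1))
    (log_exp_one_div_le_of_le hs hst) (neg_nonpos.2 hb)

lemma rpow_le_mul_log_exp_one_div_rpow_neg {δ : ℝ} (hb : 0 < b) (hδ : 0 < δ) (ht : 0 < t)
    (ht1 : t ≤ 1) : t ^ δ ≤ (b / δ) ^ b * exp 1 ^ δ * log (exp 1 / t) ^ (-b) := by
  have he : 0 < exp 1 / t := by positivity
  have hℓ : 0 < log (exp 1 / t) := one_pos.trans_le (one_le_log_exp_one_div ht ht1)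
  have hlog : log (exp 1 / t) ≤ (exp 1 / t) ^ (δ / b) / (δ / b) :=
    log_le_rpow_div he.le (by positivity)
  have hpow : log (exp 1 / t) ^ b * t ^ δ ≤ (b / δ) ^ b * exp 1 ^ δ := by
    calc log (exp 1 / t) ^ b * t ^ δ ≤ ((exp 1 / t) ^ (δ / b) / (δ / b)) ^ b * t ^ δ := by
          gcongr
      _ = (b / δ) ^ b * exp 1 ^ δ := by
          rw [div_rpow (by positivity) (by positivity), ← rpow_mul he.le,
            div_mul_cancel₀ _ hb.ne', div_rpow (exp_pos 1).le ht.le, ← inv_div δ b,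
            inv_rpow (by positivity)]
          field_simp
  rw [rpow_neg hℓ.le, ← div_eq_mul_inv, le_div_iff₀ (by positivity)]
  linarith

lemma rpow_neg_mul_log_exp_one_div_rpow_neg_nonneg {s : ℝ} (hs : s ∈ Ioc (0 : ℝ) 1) :
    0 ≤ s ^ (-a) * log (exp 1 / s) ^ (-b) :=
  mul_nonneg (rpow_nonneg hs.1.le _)
    (rpow_nonneg (zero_le_one.trans (one_le_log_exp_one_div hs.1 hs.2)) _)

lemma integrableOn_rpow_neg_mul_log_exp_one_div_rpow_neg {S : Set ℝ} (hb : 0 ≤ b)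
    (hS : MeasurableSet S) (hS1 : S ⊆ Ioc 0 1) (h : IntegrableOn (fun s : ℝ => s ^ (-a)) S) :
    IntegrableOn (fun s : ℝ => s ^ (-a) * log (exp 1 / s) ^ (-b)) S := by
  refine h.mono' (by fun_prop) (ae_restrict_of_forall_mem hS fun s hs => ?_)
  obtain ⟨hs0, hs1⟩ := hS1 hs
  rw [norm_of_nonneg (rpow_neg_mul_log_exp_one_div_rpow_neg_nonneg (hS1 hs))]
  exact mul_le_of_le_one_right (rpow_nonneg hs0.le _)
    (log_exp_one_div_rpow_neg_le_one hb hs0 hs1)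

end LogExpOneDiv

section IntegralsNearZero

variable {a b t : ℝ}

lemma setIntegral_Ioc_zero_rpow_neg_mul_log_le (ha : a < 1) (hb : 0 ≤ b) (ht : 0 < t)
    (ht1 : t ≤ 1) :
    ∫ s in Ioc 0 t, s ^ (-a) * log (exp 1 / s) ^ (-b) ≤
      (1 - a)⁻¹ * (t ^ (1 - a) * log (exp 1 / t) ^ (-b)) := by
  have hint := integrableOn_Ioc_zero_rpow_neg (t := t) ha
  calc ∫ s in Ioc 0 t, s ^ (-a) * log (exp 1 / s) ^ (-b)
      ≤ ∫ s in Ioc 0 t, s ^ (-a) * log (exp 1 / t) ^ (-b) :=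
        setIntegral_mono_on (integrableOn_rpow_neg_mul_log_exp_one_div_rpow_neg hb
          measurableSet_Ioc (Ioc_subset_Ioc_right ht1) hint) (hint.mul_const _) measurableSet_Ioc
          fun s hs => mul_le_mul_of_nonneg_left
            (log_exp_one_div_rpow_neg_le_of_le hb hs.1 hs.2 ht1) (rpow_nonneg hs.1.le _)
    _ = _ := by
      rw [integral_mul_const, setIntegral_Ioc_zero_rpow_neg ha ht.le]
      ring

lemma le_setIntegral_Ioc_zero_rpow_neg_mul_log (ha₀ : 0 ≤ a) (ha : a < 1) (hb : 0 ≤ b)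
    (ht : 0 < t) (ht1 : t ≤ 1) :
    (2 ^ (1 + b))⁻¹ * (t ^ (1 - a) * log (exp 1 / t) ^ (-b)) ≤
      ∫ s in Ioc 0 t, s ^ (-a) * log (exp 1 / s) ^ (-b) := by
  have hℓ : 0 < log (exp 1 / t) := one_pos.trans_le (one_le_log_exp_one_div ht ht1)
  have hm : ∀ s ∈ Ioc (t / 2) t,
      t ^ (-a) * (2 * log (exp 1 / t)) ^ (-b) ≤ s ^ (-a) * log (exp 1 / s) ^ (-b) := by
    intro s ⟨hs, hst⟩
    have hs0 : 0 < s := by linarith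
    gcongr ?_ * ?_
    · exact rpow_le_rpow_of_nonpos hs0 hst (neg_nonpos.2 ha₀)
    · refine rpow_le_rpow_of_nonpos (one_pos.trans_le (one_le_log_exp_one_div hs0 (hst.trans ht1)))
        ?_ (neg_nonpos.2 hb)
      exact (log_exp_one_div_le_of_le (by positivity) hs.le).trans (log_exp_one_div_half_le ht ht1)
  calc (2 ^ (1 + b))⁻¹ * (t ^ (1 - a) * log (exp 1 / t) ^ (-b))
      = t ^ (-a) * (2 * log (exp 1 / t)) ^ (-b) * (t - t / 2) := by
        rw [mul_rpow zero_le_two hℓ.le, sub_eq_add_neg 1 a, rpow_add ht, rpow_one,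
          rpow_add two_pos, rpow_one, rpow_neg zero_le_two]
        ring
    _ ≤ ∫ s in Ioc 0 t, s ^ (-a) * log (exp 1 / s) ^ (-b) :=
        mul_sub_le_setIntegral_of_Ioc_subset (by linarith) measurableSet_Ioc
          (Ioc_subset_Ioc_left (by positivity))
          (integrableOn_rpow_neg_mul_log_exp_one_div_rpow_neg hb measurableSet_Ioc
            (Ioc_subset_Ioc_right ht1) (integrableOn_Ioc_zero_rpow_neg ha))
          (fun s hs => rpow_neg_mul_log_exp_one_div_rpow_neg_nonneg ⟨hs.1, hs.2.trans ht1⟩) hm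

end IntegralsNearZero

section IntegralsNearOne

variable {a b t : ℝ}

lemma le_setIntegral_Ioc_one_rpow_neg_mul_log (ha₀ : 0 ≤ a) (hb : 0 ≤ b) (ht : 0 < t)
    (ht2 : t ≤ 1 / 2) :
    (2 ^ a)⁻¹ * (t ^ (1 - a) * log (exp 1 / t) ^ (-b)) ≤
      ∫ s in Ioc t 1, s ^ (-a) * log (exp 1 / s) ^ (-b) := by
  have hm : ∀ s ∈ Ioc t (2 * t),
      (2 * t) ^ (-a) * log (exp 1 / t) ^ (-b) ≤ s ^ (-a) * log (exp 1 / s) ^ (-b) := by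
    intro s ⟨hts, hs⟩
    have hs0 : 0 < s := ht.trans hts
    exact mul_le_mul (rpow_le_rpow_of_nonpos hs0 hs (neg_nonpos.2 ha₀))
      (log_exp_one_div_rpow_neg_le_of_le hb ht hts.le (by linarith))
      (rpow_nonneg (zero_le_one.trans (one_le_log_exp_one_div ht (by linarith))) _)
      (rpow_nonneg hs0.le _)
  calc (2 ^ a)⁻¹ * (t ^ (1 - a) * log (exp 1 / t) ^ (-b))
      = (2 * t) ^ (-a) * log (exp 1 / t) ^ (-b) * (2 * t - t) := by
        rw [mul_rpow zero_le_two ht.le, sub_eq_add_neg 1 a, rpow_add ht, rpow_one,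
          rpow_neg zero_le_two]
        ring
    _ ≤ ∫ s in Ioc t 1, s ^ (-a) * log (exp 1 / s) ^ (-b) :=
        mul_sub_le_setIntegral_of_Ioc_subset (by linarith) measurableSet_Ioc
          (Ioc_subset_Ioc_right (by linarith))
          (integrableOn_rpow_neg_mul_log_exp_one_div_rpow_neg hb measurableSet_Ioc
            (Ioc_subset_Ioc_left ht.le) (integrableOn_Ioc_rpow ht (by linarith)))
          (fun s hs => rpow_neg_mul_log_exp_one_div_rpow_neg_nonneg ⟨ht.trans hs.1, hs.2⟩) hm

lemma setIntegral_Ioc_sqrt_rpow_neg_mul_log_le (ha : 1 < a) (hb : 0 ≤ b) (ht : 0 < t)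
    (ht1 : t ≤ 1) :
    ∫ s in Ioc t (t ^ (1 / 2 : ℝ)), s ^ (-a) * log (exp 1 / s) ^ (-b) ≤
      2 ^ b / (a - 1) * (t ^ (1 - a) * log (exp 1 / t) ^ (-b)) := by
  have hℓ : 0 < log (exp 1 / t) := one_pos.trans_le (one_le_log_exp_one_div ht ht1)
  have htr : t ≤ t ^ (1 / 2 : ℝ) := by
    simpa using rpow_le_rpow_of_exponent_ge ht ht1 (by norm_num : (1 / 2 : ℝ) ≤ 1)
  have hint := integrableOn_Ioc_rpow (a := -a) ht htr
  calc ∫ s in Ioc t (t ^ (1 / 2 : ℝ)), s ^ (-a) * log (exp 1 / s) ^ (-b)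
      ≤ ∫ s in Ioc t (t ^ (1 / 2 : ℝ)), s ^ (-a) * (log (exp 1 / t) / 2) ^ (-b) := by
        refine setIntegral_mono_on (integrableOn_rpow_neg_mul_log_exp_one_div_rpow_neg hb
          measurableSet_Ioc (Ioc_subset_Ioc ht.le (rpow_le_one ht.le ht1 (by norm_num))) hint)
          (hint.mul_const _) measurableSet_Ioc fun s ⟨hts, hsr⟩ => ?_
        refine mul_le_mul_of_nonneg_left (rpow_le_rpow_of_nonpos (by positivity) ?_
          (neg_nonpos.2 hb)) (rpow_nonneg (ht.trans hts).le _)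
        linarith [log_exp_one_div_le_two_mul_sqrt ht, log_exp_one_div_le_of_le (ht.trans hts) hsr]
    _ ≤ t ^ (1 - a) / (a - 1) * (log (exp 1 / t) / 2) ^ (-b) := by
        rw [integral_mul_const]
        gcongr
        exact setIntegral_Ioc_rpow_neg_le ha ht htr
    _ = 2 ^ b / (a - 1) * (t ^ (1 - a) * log (exp 1 / t) ^ (-b)) := by
        rw [div_rpow hℓ.le zero_le_two, rpow_neg zero_le_two]
        field_simp

lemma setIntegral_Ioc_sqrt_one_rpow_neg_mul_log_le (ha : 1 < a) (hb : 0 < b) (ht : 0 < t)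
    (ht1 : t ≤ 1) :
    ∫ s in Ioc (t ^ (1 / 2 : ℝ)) 1, s ^ (-a) * log (exp 1 / s) ^ (-b) ≤
      (b / ((a - 1) / 2)) ^ b * exp 1 ^ ((a - 1) / 2) / (a - 1) *
        (t ^ (1 - a) * log (exp 1 / t) ^ (-b)) := by
  have hr : 0 < t ^ (1 / 2 : ℝ) := by positivity
  have hr1 : t ^ (1 / 2 : ℝ) ≤ 1 := rpow_le_one ht.le ht1 (by norm_num)
  have hint := integrableOn_Ioc_rpow (a := -a) hr hr1
  calc ∫ s in Ioc (t ^ (1 / 2 : ℝ)) 1, s ^ (-a) * log (exp 1 / s) ^ (-b)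
      ≤ ∫ s in Ioc (t ^ (1 / 2 : ℝ)) 1, s ^ (-a) :=
        setIntegral_mono_on (integrableOn_rpow_neg_mul_log_exp_one_div_rpow_neg hb.le
          measurableSet_Ioc (Ioc_subset_Ioc_left hr.le) hint) hint measurableSet_Ioc
          fun s hs => mul_le_of_le_one_right (rpow_nonneg (hr.trans hs.1).le _)
            (log_exp_one_div_rpow_neg_le_one hb.le (hr.trans hs.1) hs.2)
    _ ≤ (t ^ (1 / 2 : ℝ)) ^ (1 - a) / (a - 1) := setIntegral_Ioc_rpow_neg_le ha hr hr1
    _ = t ^ (1 - a) * t ^ ((a - 1) / 2) / (a - 1) := by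
        rw [← rpow_mul ht.le, ← rpow_add ht]
        ring_nf
    _ ≤ t ^ (1 - a) / (a - 1) *
          ((b / ((a - 1) / 2)) ^ b * exp 1 ^ ((a - 1) / 2) * log (exp 1 / t) ^ (-b)) := by
        rw [mul_div_right_comm]
        exact mul_le_mul_of_nonneg_left
          (rpow_le_mul_log_exp_one_div_rpow_neg hb (by linarith) ht ht1)
          (div_nonneg (rpow_nonneg ht.le _) (by linarith))
    _ = _ := by ring

lemma setIntegral_Ioc_one_rpow_neg_mul_log_le (ha : 1 < a) (hb : 0 < b)
    (ht : 0 < t) (ht1 : t ≤ 1) :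
    ∫ s in Ioc t 1, s ^ (-a) * log (exp 1 / s) ^ (-b) ≤
      (2 ^ b + (b / ((a - 1) / 2)) ^ b * exp 1 ^ ((a - 1) / 2)) / (a - 1) *
        (t ^ (1 - a) * log (exp 1 / t) ^ (-b)) := by
  have htr : t ≤ t ^ (1 / 2 : ℝ) := by
    simpa using rpow_le_rpow_of_exponent_ge ht ht1 (by norm_num : (1 / 2 : ℝ) ≤ 1)
  have hr1 : t ^ (1 / 2 : ℝ) ≤ 1 := rpow_le_one ht.le ht1 (by norm_num)
  have hint := integrableOn_rpow_neg_mul_log_exp_one_div_rpow_neg hb.le measurableSet_Ioc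
    (Ioc_subset_Ioc_left ht.le) (integrableOn_Ioc_rpow (a := -a) ht ht1)
  rw [← Ioc_union_Ioc_eq_Ioc htr hr1] at hint ⊢
  rw [setIntegral_union (Ioc_disjoint_Ioc_of_le le_rfl) measurableSet_Ioc
    (hint.mono_set subset_union_left) (hint.mono_set subset_union_right), add_div, add_mul]
  exact add_le_add (setIntegral_Ioc_sqrt_rpow_neg_mul_log_le ha hb.le ht ht1)
    (setIntegral_Ioc_sqrt_one_rpow_neg_mul_log_le ha hb ht ht1)

end IntegralsNearOne

lemma tendsto_log_exp_one_div_nhdsGT_zero :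
    Tendsto (fun s : ℝ => log (exp 1 / s)) (𝓝[>] 0) atTop :=
  tendsto_log_atTop.comp ((tendsto_inv_nhdsGT_zero.const_mul_atTop (exp_pos 1)).congr
    fun _ => (div_eq_mul_inv _ _).symm)

lemma hasDerivAt_log_exp_one_div {x : ℝ} (hx : 0 < x) :
    HasDerivAt (fun s => log (exp 1 / s)) (-x⁻¹) x :=
  ((hasDerivAt_log hx.ne').const_sub 1).congr_of_eventuallyEq
    ((eventually_gt_nhds hx).mono fun _ hs => log_exp_one_div hs)

lemma setIntegral_Ioc_zero_inv_mul_log_rpow {b t : ℝ} (hb : 0 < b) (ht : 0 < t) (ht1 : t ≤ 1) :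
    ∫ s in Ioc 0 t, s ^ (-1 : ℝ) * log (exp 1 / s) ^ (-(b + 1)) = log (exp 1 / t) ^ (-b) / b := by
  set G : ℝ → ℝ := fun s => log (exp 1 / s) ^ (-b) / b
  have hG : ∀ x ∈ Ioc (0 : ℝ) 1,
      HasDerivAt G (x ^ (-1 : ℝ) * log (exp 1 / x) ^ (-(b + 1))) x := by
    intro x ⟨hx, hx1⟩
    have hℓ := one_pos.trans_le (one_le_log_exp_one_div hx hx1)
    refine (((hasDerivAt_log_exp_one_div hx).rpow_const (Or.inl hℓ.ne')).div_const b).congr_deriv ?_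
    rw [rpow_neg_one, show -b - 1 = -(b + 1) by ring]
    field_simp
  have hcont : ContinuousOn G (Icc 0 t) := by
    rintro x ⟨hx0, hxt⟩
    rcases hx0.eq_or_lt with rfl | hx0
    · -- `G 0 = 0`, since `exp 1 / 0 = 0`, `log 0 = 0` and `0 ^ (-b) = 0`.
      refine ContinuousWithinAt.mono ?_ Icc_subset_Ici_self
      rw [← continuousWithinAt_Ioi_iff_Ici, ContinuousWithinAt]
      simpa [G, zero_rpow (neg_ne_zero.2 hb.ne')] using
        ((tendsto_rpow_neg_atTop hb).comp tendsto_log_exp_one_div_nhdsGT_zero).div_const b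
    · exact (hG x ⟨hx0, hxt.trans ht1⟩).continuousAt.continuousWithinAt
  have hG' : ∀ x ∈ Ioo 0 t, HasDerivAt G (x ^ (-1 : ℝ) * log (exp 1 / x) ^ (-(b + 1))) x :=
    fun x hx => hG x ⟨hx.1, hx.2.le.trans ht1⟩
  have hint := intervalIntegral.integrableOn_deriv_of_nonneg hcont hG' fun x hx =>
    rpow_neg_mul_log_exp_one_div_rpow_neg_nonneg ⟨hx.1, hx.2.le.trans ht1⟩
  rw [← intervalIntegral.integral_of_le ht.le, intervalIntegral.integral_eq_sub_of_hasDerivAt_of_le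
    ht.le hcont hG' ((intervalIntegrable_iff_integrableOn_Ioc_of_le ht.le).2 hint)]
  simp [G, zero_rpow (neg_ne_zero.2 hb.ne')]

lemma setIntegral_rpow_neg_mul_log_rpow_neg_rpow {a b c : ℝ} {S : Set ℝ} (hS : MeasurableSet S)
    (hS1 : S ⊆ Ioc 0 1) :
    ∫ s in S, (s ^ (-a) * log (exp 1 / s) ^ (-b)) ^ c =
      ∫ s in S, s ^ (-(a * c)) * log (exp 1 / s) ^ (-(b * c)) :=
  setIntegral_congr_fun hS fun s hs => by
    obtain ⟨hs0, hs1⟩ := hS1 hs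
    have hℓ := zero_le_one.trans (one_le_log_exp_one_div hs0 hs1)
    rw [mul_rpow (rpow_nonneg hs0.le _) (rpow_nonneg hℓ _), ← rpow_mul hs0.le, ← rpow_mul hℓ,
      neg_mul, neg_mul]

lemma IsComparableOn.of_setIntegral_bounds {a b c C₀ : ℝ} {I : ℝ → ℝ} {S : Set ℝ}
    (hS : S ⊆ Ioc 0 1) (hc : 0 < c)
    (h : ∀ t ∈ S, c * (t ^ (1 - a) * log (exp 1 / t) ^ (-b)) ≤ I t ∧
      I t ≤ C₀ * (t ^ (1 - a) * log (exp 1 / t) ^ (-b))) :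
    IsComparableOn (fun t => 1 / t * I t) (fun t => 1 / (t ^ a * log (exp 1 / t) ^ b)) S := by
  have hpos : ∀ t ∈ S, 0 < t ∧ 0 < log (exp 1 / t) := fun t ht =>
    ⟨(hS ht).1, one_pos.trans_le (one_le_log_exp_one_div (hS ht).1 (hS ht).2)⟩
  refine .of_bounds (C₀ := C₀) hc (fun t ht => ?_) fun t ht => ?_
  · obtain ⟨ht0, hℓ⟩ := hpos t ht
    positivity
  · obtain ⟨ht0, hℓ⟩ := hpos t ht
    have key (K : ℝ) :
        K * (1 / (t ^ a * log (exp 1 / t) ^ b)) =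
          1 / t * (K * (t ^ (1 - a) * log (exp 1 / t) ^ (-b))) := by
      rw [sub_eq_add_neg, rpow_add ht0, rpow_one, rpow_neg ht0.le, rpow_neg hℓ.le]
      field_simp
    rw [key, key]
    exact ⟨mul_le_mul_of_nonneg_left (h t ht).1 (by positivity),
      mul_le_mul_of_nonneg_left (h t ht).2 (by positivity)⟩

lemma isComparableOn_setIntegral_Ioc_zero_inv_mul_log_rpow {b : ℝ} (hb : 0 < b) :
    IsComparableOn (fun t => 1 / t * ∫ s in Ioc 0 t, s ^ (-1 : ℝ) * log (exp 1 / s) ^ (-(b + 1)))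
      (fun t => 1 / (t * log (exp 1 / t) ^ b)) (Ioc 0 1) := by
  refine .of_bounds (c := b⁻¹) (C₀ := b⁻¹) (inv_pos.2 hb) (fun t ⟨ht, ht1⟩ => ?_)
    fun t ⟨ht, ht1⟩ => ?_
  · have hℓ := one_pos.trans_le (one_le_log_exp_one_div ht ht1)
    positivity
  · have hℓ := one_pos.trans_le (one_le_log_exp_one_div ht ht1)
    have key : 1 / t * ∫ s in Ioc 0 t, s ^ (-1 : ℝ) * log (exp 1 / s) ^ (-(b + 1)) =
        b⁻¹ * (1 / (t * log (exp 1 / t) ^ b)) := by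
      rw [setIntegral_Ioc_zero_inv_mul_log_rpow hb ht ht1, rpow_neg hℓ.le]
      field_simp
    exact ⟨key.ge, key.le⟩

lemma isComparableOn_setIntegral_Ioc_zero_rpow_neg_mul_log {a b : ℝ} (ha₀ : 0 ≤ a) (ha : a < 1)
    (hb : 0 ≤ b) :
    IsComparableOn (fun t => 1 / t * ∫ s in Ioc 0 t, s ^ (-a) * log (exp 1 / s) ^ (-b))
      (fun t => 1 / (t ^ a * log (exp 1 / t) ^ b)) (Ioc 0 1) :=
  .of_setIntegral_bounds subset_rfl (by positivity) fun _ ⟨ht, ht1⟩ =>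
    ⟨le_setIntegral_Ioc_zero_rpow_neg_mul_log ha₀ ha hb ht ht1,
      setIntegral_Ioc_zero_rpow_neg_mul_log_le ha hb ht ht1⟩

lemma isComparableOn_setIntegral_Ioc_one_rpow_neg_mul_log {a b : ℝ} (ha : 1 < a) (hb : 0 < b) :
    IsComparableOn (fun t => 1 / t * ∫ s in Ioc t 1, s ^ (-a) * log (exp 1 / s) ^ (-b))
      (fun t => 1 / (t ^ a * log (exp 1 / t) ^ b)) (Ioc 0 (1 / 2)) :=
  .of_setIntegral_bounds (Ioc_subset_Ioc_right (by norm_num)) (by positivity) fun _ ⟨ht, ht2⟩ =>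
    ⟨le_setIntegral_Ioc_one_rpow_neg_mul_log (by linarith) hb.le ht ht2,
      setIntegral_Ioc_one_rpow_neg_mul_log_le ha hb ht (by linarith)⟩

/-- Standard estimates for `f(t) = t^{-1/p} ln^{-3/(2p)}(e/t)`, `1 < p < 2`:
`(1/t)∫₀ᵗ f^p ≍ 1/(t ln^{1/2}(e/t))` and `(1/t)∫₀ᵗ f ≍ 1/(t^{1/p} ln^{3/(2p)}(e/t))`
on `(0,1]`, and `(1/t)∫ₜ¹ f² ≍ 1/(t^{2/p} ln^{3/p}(e/t))` on `(0,1/2]`, with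
equivalence constants depending only on `p`. -/
theorem stmt11 (p : ℝ) (hp1 : 1 < p) (hp2 : p < 2) :
    ∃ C : ℝ, 0 < C ∧
      (∀ t ∈ Ioc (0:ℝ) 1,
        C⁻¹ * (1 / (t * Real.log (Real.exp 1 / t) ^ ((1:ℝ)/2))) ≤
          (1 / t) * (∫ s in Ioc (0:ℝ) t,
            (s ^ (-(1/p)) * Real.log (Real.exp 1 / s) ^ (-(3/(2*p)))) ^ p) ∧
        (1 / t) * (∫ s in Ioc (0:ℝ) t,
            (s ^ (-(1/p)) * Real.log (Real.exp 1 / s) ^ (-(3/(2*p)))) ^ p) ≤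
          C * (1 / (t * Real.log (Real.exp 1 / t) ^ ((1:ℝ)/2)))) ∧
      (∀ t ∈ Ioc (0:ℝ) 1,
        C⁻¹ * (1 / (t ^ (1/p) * Real.log (Real.exp 1 / t) ^ (3/(2*p)))) ≤
          (1 / t) * (∫ s in Ioc (0:ℝ) t,
            s ^ (-(1/p)) * Real.log (Real.exp 1 / s) ^ (-(3/(2*p)))) ∧
        (1 / t) * (∫ s in Ioc (0:ℝ) t,
            s ^ (-(1/p)) * Real.log (Real.exp 1 / s) ^ (-(3/(2*p)))) ≤
          C * (1 / (t ^ (1/p) * Real.log (Real.exp 1 / t) ^ (3/(2*p))))) ∧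
      (∀ t : ℝ, 0 < t → t ≤ 1/2 →
        C⁻¹ * (1 / (t ^ (2/p) * Real.log (Real.exp 1 / t) ^ (3/p))) ≤
          (1 / t) * (∫ s in Ioc t (1:ℝ),
            (s ^ (-(1/p)) * Real.log (Real.exp 1 / s) ^ (-(3/(2*p)))) ^ (2:ℝ)) ∧
        (1 / t) * (∫ s in Ioc t (1:ℝ),
            (s ^ (-(1/p)) * Real.log (Real.exp 1 / s) ^ (-(3/(2*p)))) ^ (2:ℝ)) ≤
          C * (1 / (t ^ (2/p) * Real.log (Real.exp 1 / t) ^ (3/p)))) := by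
  have hp : 0 < p := by linarith
  have e₁ : 3 / (2 * p) * p = 1 / 2 + 1 := by field_simp; norm_num
  have e₂ : 1 / p * 2 = 2 / p := by ring
  have e₃ : 3 / (2 * p) * 2 = 3 / p := by field_simp
  have h₁ := isComparableOn_setIntegral_Ioc_zero_inv_mul_log_rpow (b := 1 / 2) (by norm_num)
  have h₂ := isComparableOn_setIntegral_Ioc_zero_rpow_neg_mul_log (a := 1 / p) (b := 3 / (2 * p))
    (by positivity) ((div_lt_one hp).2 hp1) (by positivity)
  have h₃ := isComparableOn_setIntegral_Ioc_one_rpow_neg_mul_log (a := 2 / p) (b := 3 / p)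
    ((one_lt_div hp).2 hp2) (by positivity)
  obtain ⟨C, hC, h₁, h₂, h₃⟩ :=
    ((eventually_gt_atTop 0).and (Eventually.and h₁ (Eventually.and h₂ h₃))).exists
  refine ⟨C, hC, fun t ht => ?_, h₂, fun t ht₀ ht₂ => ?_⟩
  · rw [setIntegral_rpow_neg_mul_log_rpow_neg_rpow measurableSet_Ioc (Ioc_subset_Ioc_right ht.2),
      one_div_mul_cancel hp.ne', e₁]
    exact h₁ t ht
  · rw [setIntegral_rpow_neg_mul_log_rpow_neg_rpow measurableSet_Ioc
      (Ioc_subset_Ioc_left ht₀.le), e₂, e₃]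
    exact h₃ t ⟨ht₀, ht₂⟩
end
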